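/- Let N ≥ 1, s ≥ 1, Ω ⊆ ℤ/Nℤ nonempty, and K(t) = ∑_{ω ∈ Ω} e^{2πiωt/N}. If |K(t)| < K(0)/(2s) for all t ≠ 0 in ℤ/Nℤ, then |Ω| ≥ 4s²N/(N + 4s² − 1). -/

import Mathlib

/-!
By Parseval, `∑ₜ |K(t)|² = N |Ω|`. The term `t = 0` contributes `|Ω|²` and each of the other
`N - 1` terms at most `(|Ω|/(2s))²`, so `N |Ω| ≤ |Ω|² + (N - 1) |Ω|² / (4s²)`; dividing by `|Ω|`
and solving for `|Ω|` gives the bound.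
-/

open Finset Complex

/-- The idempotent `K(t) = ∑_{ω ∈ Ω} e(ωt/N)`. -/
noncomputable def idemK (N : ℕ) [NeZero N] (Ω : Finset (ZMod N)) (t : ZMod N) : ℂ :=
  ∑ ω ∈ Ω, Complex.exp (2 * Real.pi * Complex.I * (ω.val * t.val) / N)

lemma AddChar.sum_sq_norm_sum_mulShift {R : Type*} [CommRing R] [Fintype R] [DecidableEq R]
    {ψ : AddChar R ℂ} (hψ : ψ.IsPrimitive) (Ω : Finset R) :
    ∑ t : R, ‖∑ ω ∈ Ω, ψ (ω * t)‖ ^ 2 = Fintype.card R * #Ω := by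
  have hR : 0 < ringChar R := Nat.pos_of_ne_zero (CharP.char_ne_zero_of_finite R (ringChar R))
  suffices h : ∑ t : R, (∑ ω ∈ Ω, ψ (ω * t)) * (starRingEnd ℂ) (∑ ω ∈ Ω, ψ (ω * t)) =
      Fintype.card R * #Ω by
    have hC : ((∑ t : R, ‖∑ ω ∈ Ω, ψ (ω * t)‖ ^ 2 : ℝ) : ℂ) = Fintype.card R * #Ω := by
      push_cast
      simp only [← Complex.mul_conj', h]
    exact_mod_cast hC
  calc ∑ t : R, (∑ ω ∈ Ω, ψ (ω * t)) * (starRingEnd ℂ) (∑ ω ∈ Ω, ψ (ω * t))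
      = ∑ ω ∈ Ω, ∑ ω' ∈ Ω, ∑ t : R, ψ (t * (ω - ω')) := by
        simp only [map_sum, AddChar.starComp_apply hR, AddChar.inv_apply, sum_mul_sum]
        rw [sum_comm]
        refine sum_congr rfl fun ω _ => ?_
        rw [sum_comm]
        refine sum_congr rfl fun ω' _ => sum_congr rfl fun t _ => ?_
        rw [← AddChar.map_add_eq_mul]
        ring_nf
    _ = ∑ ω ∈ Ω, (Fintype.card R : ℂ) := by
        refine sum_congr rfl fun ω hω => ?_
        simp only [AddChar.sum_mulShift _ hψ, sub_eq_zero, Nat.cast_ite, Nat.cast_zero,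
          sum_ite_eq, hω, if_true]
    _ = Fintype.card R * #Ω := by rw [sum_const, nsmul_eq_mul, mul_comm]

lemma Fintype.sum_le_apply_zero_add_card_sub_one_mul {G : Type*} [Fintype G] [DecidableEq G]
    [Zero G] (f : G → ℝ) {b : ℝ} (hb : ∀ t, t ≠ 0 → f t ≤ b) :
    ∑ t, f t ≤ f 0 + (Fintype.card G - 1) * b := by
  have hcard : ((univ.erase (0 : G)).card : ℝ) = Fintype.card G - 1 := by
    rw [card_erase_of_mem (mem_univ 0), card_univ,
      Nat.cast_sub (Fintype.card_pos_iff.mpr ⟨0⟩), Nat.cast_one]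
  rw [← add_sum_erase _ _ (mem_univ 0), ← hcard, ← nsmul_eq_mul]
  exact add_le_add le_rfl (sum_le_card_nsmul _ _ _ fun t ht => hb t (ne_of_mem_erase ht))

lemma div_le_of_mul_le_sq_add_mul_div_sq {N m s : ℝ} (hN : 1 ≤ N) (hm : 0 < m)
    (h : N * m ≤ m ^ 2 + (N - 1) * (m / (2 * s)) ^ 2) :
    4 * s ^ 2 * N / (N + 4 * s ^ 2 - 1) ≤ m := by
  have hscale : 4 * s ^ 2 * (m / (2 * s)) ^ 2 ≤ m ^ 2 := by
    rcases eq_or_ne s 0 with rfl | hs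
    · simp [sq_nonneg]
    · apply le_of_eq
      field_simp
      ring
  refine div_le_of_le_mul₀ (by nlinarith) hm.le ?_
  nlinarith [mul_le_mul_of_nonneg_left h (by positivity : (0 : ℝ) ≤ 4 * s ^ 2)]

lemma idemK_eq_sum_stdAddChar (N : ℕ) [NeZero N] (Ω : Finset (ZMod N)) (t : ZMod N) :
    idemK N Ω t = ∑ ω ∈ Ω, ZMod.stdAddChar (ω * t) := by
  refine sum_congr rfl fun ω _ => ?_
  have hval : ω * t = ((ω.val * t.val : ℕ) : ZMod N) := by simp
  rw [hval, ZMod.stdAddChar_apply, ZMod.toCircle_natCast]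
  push_cast
  ring_nf

lemma idemK_zero (N : ℕ) [NeZero N] (Ω : Finset (ZMod N)) : idemK N Ω 0 = #Ω := by
  simp [idemK_eq_sum_stdAddChar]

lemma sum_sq_norm_idemK (N : ℕ) [NeZero N] (Ω : Finset (ZMod N)) :
    ∑ t, ‖idemK N Ω t‖ ^ 2 = N * #Ω := by
  simpa only [idemK_eq_sum_stdAddChar, ZMod.card] using
    AddChar.sum_sq_norm_sum_mulShift (ZMod.isPrimitive_stdAddChar N) Ω

theorem stmt3_general (N : ℕ) [NeZero N] (s : ℕ)
    (Ω : Finset (ZMod N)) (hΩ : Ω.Nonempty)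
    (hK : ∀ t : ZMod N, t ≠ 0 →
      ‖idemK N Ω t‖ < ‖idemK N Ω 0‖ / (2 * s)) :
    (Ω.card : ℝ) ≥ 4 * s ^ 2 * N / (N + 4 * s ^ 2 - 1) := by
  have hK0 : ‖idemK N Ω 0‖ = #Ω := by rw [idemK_zero, Complex.norm_natCast]
  have hbound : ∀ t : ZMod N, t ≠ 0 → ‖idemK N Ω t‖ ^ 2 ≤ (#Ω / (2 * s) : ℝ) ^ 2 :=
    fun t ht => pow_le_pow_left₀ (norm_nonneg _) (hK0 ▸ (hK t ht).le) 2
  have hparseval := sum_sq_norm_idemK N Ω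
  have hsplit := Fintype.sum_le_apply_zero_add_card_sub_one_mul _ hbound
  rw [hparseval, hK0, ZMod.card] at hsplit
  exact div_le_of_mul_le_sq_add_mul_div_sq (mod_cast NeZero.one_le)
    (mod_cast hΩ.card_pos) hsplit

/-- Inequality (8): if `|K(t)| < K(0)/(2s)` for all `t ≠ 0`, then
`|Ω| ≥ 4s²N/(N + 4s² − 1)`. -/
theorem stmt3 (N : ℕ) [NeZero N] (hN : 1 ≤ N) (s : ℕ) (hs : 1 ≤ s)
    (Ω : Finset (ZMod N)) (hΩ : Ω.Nonempty)
    (hK : ∀ t : ZMod N, t ≠ 0 →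
      ‖idemK N Ω t‖ < ‖idemK N Ω 0‖ / (2 * s)) :
    (Ω.card : ℝ) ≥ 4 * s ^ 2 * N / (N + 4 * s ^ 2 - 1) :=
  stmt3_general N s Ω hΩ hK
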